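/- Let k, l ≥ 1. In the braid group B_{k+l}, the braid t_{k,l} admits the alternative expansion t_{k,l} = r_{l−1}(b_k) · r_{l−2}(b_k) ⋯ r_1(b_k) · r_0(b_k); that is, r_0(χ(b_l)) · r_1(χ(b_l)) ⋯ r_{k−1}(χ(b_l)) = r_{l−1}(b_k) · r_{l−2}(b_k) ⋯ r_0(b_k). -/

import Mathlib

/-!
Formalization of identities in the Artin braid group `B_m`.

We encode "the identity `w₁ = w₂` holds in the braid group `B_m`" via the universal
property of the presented group: it holds in `B_m` iff for every group `G` and every
assignment `σ : ℕ → G` of the generators `σ_1, …, σ_{m-1}` satisfying the defining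
braid relations of `B_m`, the corresponding products in `G` are equal.

Braid words are recorded as lists of (1-based) generator indices; `wordProd σ w`
is the corresponding product.  The anti-automorphism `χ` (which fixes each
generator and reverses the order of the letters of a word) corresponds to
`List.reverse` on words, and the shift homomorphism `r_a : σ_i ↦ σ_{i+a}`
corresponds to `rWord a` on words.
-/

namespace Braid

variable {G : Type*} [Group G]

/-- The product in `G` of the braid word `w` (a list of 1-based generator indices). -/
def wordProd (σ : ℕ → G) (w : List ℕ) : G := (w.map σ).prod

/-- `σ 1, …, σ (m-1)` satisfy the defining relations of the Artin braid group `B_m`: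
`σ_i σ_{i+1} σ_i = σ_{i+1} σ_i σ_{i+1}` for `1 ≤ i ≤ m-2`, and
`σ_i σ_j = σ_j σ_i` for `|i - j| ≥ 2`, `1 ≤ i, j ≤ m-1`. -/
def IsBraidRep (m : ℕ) (σ : ℕ → G) : Prop :=
  (∀ i, 1 ≤ i → i + 2 ≤ m → σ i * σ (i + 1) * σ i = σ (i + 1) * σ i * σ (i + 1)) ∧
  (∀ i j, 1 ≤ i → i + 2 ≤ j → j + 1 ≤ m → σ i * σ j = σ j * σ i)

/-- The word `[1, 2, …, j]` representing `b_j = σ_1 σ_2 ⋯ σ_j` (with `b_0 = e`). -/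
def bWord (j : ℕ) : List ℕ := List.range' 1 j

/-- The word representing the superselection braid `β_n = b_{n-1} b_{n-2} ⋯ b_1`
(with `β_1 = β_0 = e`). -/
def betaWord : ℕ → List ℕ
  | 0 => []
  | n + 1 => bWord n ++ betaWord n

/-- The shift `r_a : σ_i ↦ σ_{i+a}` on braid words. -/
def rWord (a : ℕ) (w : List ℕ) : List ℕ := w.map (· + a)

/-- The word representing `t_{k,l} = r_0(χ(b_l)) · r_1(χ(b_l)) ⋯ r_{k-1}(χ(b_l))`,
the braid clockwise exchanging a block of `k` strands with a block of `l` strands. -/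
def tWord : ℕ → ℕ → List ℕ
  | 0, _ => []
  | k + 1, l => tWord k l ++ rWord k (bWord l).reverse

lemma wordProd_append (σ : ℕ → G) (w₁ w₂ : List ℕ) :
    wordProd σ (w₁ ++ w₂) = wordProd σ w₁ * wordProd σ w₂ := by
  simp [wordProd]

lemma interleave (a b : ℕ → G) (l : ℕ)
    (hcomm : ∀ i j, j < i → i < l → Commute (b i) (a j)) :
    ((List.range l).reverse.map a).prod * ((List.range l).reverse.map b).prod
      = ((List.range l).reverse.map fun i => a i * b i).prod := by
  induction l with
  | zero => simp
  | succ n ih =>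
    have hrev : (List.range (n + 1)).reverse = n :: (List.range n).reverse := by
      rw [List.range_succ, List.reverse_append, List.reverse_singleton,
        List.singleton_append]
    rw [hrev]
    simp only [List.map_cons, List.prod_cons]
    have hc : Commute (b n) ((List.range n).reverse.map a).prod := by
      apply Commute.list_prod_right
      intro y hy
      obtain ⟨j, hj, rfl⟩ := List.mem_map.1 hy
      exact hcomm n j (List.mem_range.1 (List.mem_reverse.1 hj)) (Nat.lt_succ_self n)
    calc a n * ((List.range n).reverse.map a).prod *
          (b n * ((List.range n).reverse.map b).prod)
        = a n * (((List.range n).reverse.map a).prod * b n) *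
          ((List.range n).reverse.map b).prod := by
          rw [mul_assoc, mul_assoc, mul_assoc, ← mul_assoc _ (b n)]
      _ = a n * b n * (((List.range n).reverse.map a).prod *
          ((List.range n).reverse.map b).prod) := by
          rw [← hc.eq]; rw [mul_assoc, mul_assoc, mul_assoc]
      _ = a n * b n * ((List.range n).reverse.map fun i => a i * b i).prod := by
          rw [ih (fun i j hji hi => hcomm i j hji (Nat.lt_succ_of_lt hi))]

lemma t_alt_aux (σ : ℕ → G) (m l : ℕ) (h : IsBraidRep m σ) :
    ∀ k, k + l ≤ m → wordProd σ (tWord k l) =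
      ((List.range l).reverse.map fun i => wordProd σ (rWord i (bWord k))).prod := by
  intro k
  induction k with
  | zero =>
    intro _
    simp [tWord, wordProd, bWord, rWord]
  | succ k ih =>
    intro hkl
    rw [tWord, wordProd_append, ih (by omega)]
    have hQ : wordProd σ (rWord k (bWord l).reverse)
        = ((List.range l).reverse.map fun i => σ (k + 1 + i)).prod := by
      unfold wordProd rWord bWord
      rw [List.range'_eq_map_range, ← List.map_reverse, List.map_map, List.map_map]
      congr 1
      apply List.map_congr_left
      intro i _
      simp only [Function.comp_apply]
      congr 1
      omega
    rw [hQ, interleave]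
    · congr 1
      apply List.map_congr_left
      intro i _
      have hb : bWord (k + 1) = bWord k ++ [1 + k] := by simpa [bWord] using (List.range'_concat (step := 1) : List.range' 1 (k + 1) = _)
      rw [hb]
      unfold rWord
      rw [List.map_append, wordProd_append]
      simp [wordProd]
      congr 2
      omega
    · intro i j hji hil
      apply Commute.list_prod_right
      intro y hy
      unfold rWord bWord at hy
      obtain ⟨t, ht, rfl⟩ := List.mem_map.1 hy
      obtain ⟨t', ht', rfl⟩ := List.mem_map.1 ht
      have ht'' := List.mem_range'_1.1 ht'
      exact (h.2 (t' + j) (k + 1 + i) (by omega) (by omega) (by omega)).symm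

/-- Let `k, l ≥ 1`.  In the braid group `B_{k+l}`, the braid `t_{k,l}` admits the
alternative expansion `t_{k,l} = r_{l-1}(b_k) ⬝ r_{l-2}(b_k) ⋯ r_1(b_k) ⬝ r_0(b_k)`;
that is, `r_0(χ(b_l)) ⬝ r_1(χ(b_l)) ⋯ r_{k-1}(χ(b_l)) = r_{l-1}(b_k) ⋯ r_0(b_k)`. -/
theorem t_alt_expansion (k l : ℕ) (hk : 1 ≤ k) (hl : 1 ≤ l) (σ : ℕ → G)
    (h : IsBraidRep (k + l) σ) :
    wordProd σ (tWord k l) =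
      ((List.range l).reverse.map fun i => wordProd σ (rWord i (bWord k))).prod := by
  exact t_alt_aux σ (k + l) l h k le_rfl

end Braid
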